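/- (Lemma 2.5, Aouchiche–Hansen) Let G be a connected graph and let u and v be two non-adjacent vertices of G. Then ρ_L(G + uv) ≤ ρ_L(G), where G + uv is the graph obtained from G by adding the edge uv. -/

import Mathlib

open Matrix Finset

/-- The transmission of a vertex: sum of distances to all vertices. -/
noncomputable def transmission {V : Type*} [Fintype V] (G : SimpleGraph V) (u : V) : ℝ :=
  ∑ w : V, (G.dist u w : ℝ)

/-- The distance Laplacian matrix `L_D(G) = Tr(G) - D(G)`. -/
noncomputable def distLaplacian {V : Type*} [Fintype V] (G : SimpleGraph V) :
    Matrix V V ℝ := fun u v =>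
  letI := Classical.decEq V
  (if u = v then transmission G u else 0) - (G.dist u v : ℝ)

/-- The largest eigenvalue of the distance Laplacian (distance Laplacian spectral radius). -/
noncomputable def rhoL {V : Type*} [Fintype V] (G : SimpleGraph V) : ℝ :=
  sSup {μ : ℝ | ∃ x : V → ℝ, x ≠ 0 ∧ (distLaplacian G).mulVec x = μ • x}

/-! The quadratic form of the distance Laplacian is
`x ⬝ᵥ L_D(G) *ᵥ x = ½ ∑_{a,b} d_G(a,b) (x a - x b)²`. Adding edges to a connected graph can only
shorten distances, so the quadratic form of `L_D(G + uv)` is pointwise at most that of `L_D(G)`.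
For a symmetric matrix the largest eigenvalue is the maximum of the Rayleigh quotient, hence
`ρ_L(G + uv) ≤ ρ_L(G)`. -/

open Module.End

namespace LinearMap

variable {𝕜 E : Type*} [RCLike 𝕜] [NormedAddCommGroup E] [InnerProductSpace 𝕜 E]
  {T S : E →ₗ[𝕜] E}

theorem rayleigh_eq_of_hasEigenvector {μ : ℝ} {x : E} (hx : HasEigenvector T μ x) :
    RCLike.re (inner 𝕜 (T x) x) / ‖x‖ ^ 2 = μ := by
  have hx0 : ‖x‖ ≠ 0 := norm_ne_zero_iff.2 hx.2
  rw [hx.apply_eq_smul, inner_smul_left, RCLike.conj_ofReal, inner_self_eq_norm_sq_to_K,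
    ← RCLike.ofReal_pow, ← RCLike.ofReal_mul, RCLike.ofReal_re]
  field_simp

variable [FiniteDimensional 𝕜 E]

theorem bddAbove_range_rayleigh (T : E →ₗ[𝕜] E) :
    BddAbove (Set.range fun x : {x : E // x ≠ 0} ↦ RCLike.re (inner 𝕜 (T x) x) / ‖(x : E)‖ ^ 2) :=
  ⟨‖T.toContinuousLinearMap‖, by
    rintro _ ⟨x, rfl⟩
    exact (le_abs_self _).trans (T.toContinuousLinearMap.rayleighQuotient_le_norm x)⟩

namespace IsSymmetric

theorem sSup_eigenvalues_eq_iSup_rayleigh [Nontrivial E] (hT : T.IsSymmetric) :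
    sSup {μ : ℝ | HasEigenvalue T μ}
      = ⨆ x : {x : E // x ≠ 0}, RCLike.re (inner 𝕜 (T x) x) / ‖(x : E)‖ ^ 2 :=
  IsGreatest.csSup_eq ⟨hT.hasEigenvalue_iSup_of_finiteDimensional, fun μ hμ ↦ by
    obtain ⟨x, hx⟩ := hμ.exists_hasEigenvector
    rw [← rayleigh_eq_of_hasEigenvector hx]
    exact le_ciSup (bddAbove_range_rayleigh T) ⟨x, hx.2⟩⟩

theorem sSup_eigenvalues_le_of_re_inner_le (hT : T.IsSymmetric) (hS : S.IsSymmetric)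
    (h : ∀ x, RCLike.re (inner 𝕜 (S x) x) ≤ RCLike.re (inner 𝕜 (T x) x)) :
    sSup {μ : ℝ | HasEigenvalue S μ} ≤ sSup {μ : ℝ | HasEigenvalue T μ} := by
  rcases subsingleton_or_nontrivial E with _ | _
  · have hempty (R : E →ₗ[𝕜] E) : {μ : ℝ | HasEigenvalue R μ} = ∅ :=
      Set.eq_empty_of_forall_notMem fun μ hμ ↦
        hμ.exists_hasEigenvector.elim fun x hx ↦ hx.2 (Subsingleton.elim x 0)
    rw [hempty, hempty]
  · rw [hS.sSup_eigenvalues_eq_iSup_rayleigh, hT.sSup_eigenvalues_eq_iSup_rayleigh]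
    exact ciSup_mono (bddAbove_range_rayleigh T) fun x ↦
      div_le_div_of_nonneg_right (h x) (by positivity)

end IsSymmetric

end LinearMap

namespace Matrix

variable {n : Type*} [Fintype n]

theorem hasEigenvalue_toEuclideanLin_iff [DecidableEq n] {A : Matrix n n ℝ} {μ : ℝ} :
    HasEigenvalue (toEuclideanLin A) μ ↔ ∃ x ≠ 0, A *ᵥ x = μ • x := by
  simp only [hasEigenvalue_iff, Submodule.ne_bot_iff, mem_eigenspace_iff]
  constructor
  · rintro ⟨x, hx, hx0⟩
    exact ⟨x.ofLp, by simpa using hx0, by simpa using congrArg WithLp.ofLp hx⟩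
  · rintro ⟨x, hx0, hx⟩
    exact ⟨WithLp.toLp 2 x, by simp [hx], by simpa using hx0⟩

theorem inner_toEuclideanLin_self [DecidableEq n] (A : Matrix n n ℝ) (x : EuclideanSpace ℝ n) :
    inner ℝ (toEuclideanLin A x) x = x.ofLp ⬝ᵥ A *ᵥ x.ofLp := by
  obtain ⟨x⟩ := x
  simp [EuclideanSpace.inner_toLp_toLp]

theorem sSup_eigenvalues_le_of_dotProduct_mulVec_le {A B : Matrix n n ℝ}
    (hA : A.IsHermitian) (hB : B.IsHermitian) (h : ∀ x, x ⬝ᵥ B *ᵥ x ≤ x ⬝ᵥ A *ᵥ x) :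
    sSup {μ : ℝ | ∃ x ≠ 0, B *ᵥ x = μ • x} ≤ sSup {μ : ℝ | ∃ x ≠ 0, A *ᵥ x = μ • x} := by
  classical
  simp_rw [← hasEigenvalue_toEuclideanLin_iff]
  exact (isSymmetric_toEuclideanLin_iff.2 hA).sSup_eigenvalues_le_of_re_inner_le
    (isSymmetric_toEuclideanLin_iff.2 hB) fun x ↦ by
      simpa only [RCLike.re_to_real, inner_toEuclideanLin_self] using h x.ofLp

end Matrix

section DistLaplacian

variable {V : Type*} [Fintype V]

theorem distLaplacian_isHermitian (G : SimpleGraph V) :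
    (distLaplacian G).IsHermitian := by
  ext a b
  by_cases h : a = b
  · subst h; rfl
  · simp [distLaplacian, if_neg h, if_neg (Ne.symm h), SimpleGraph.dist_comm]

theorem distLaplacian_mulVec (G : SimpleGraph V) (x : V → ℝ) (a : V) :
    (distLaplacian G *ᵥ x) a = ∑ b, (G.dist a b : ℝ) * (x a - x b) := by
  classical
  simp [distLaplacian, transmission, mulVec, dotProduct, sub_mul, mul_sub, sum_mul]

theorem dotProduct_distLaplacian_mulVec (G : SimpleGraph V) (x : V → ℝ) :
    x ⬝ᵥ distLaplacian G *ᵥ x = (∑ a, ∑ b, (G.dist a b : ℝ) * (x a - x b) ^ 2) / 2 := by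
  have hswap : ∑ a, ∑ b, (G.dist a b : ℝ) * (x a * (x a - x b))
      = ∑ a, ∑ b, (G.dist a b : ℝ) * (x b * (x b - x a)) := by
    rw [sum_comm]
    simp only [SimpleGraph.dist_comm]
  have hsplit : ∑ a, ∑ b, (G.dist a b : ℝ) * (x a - x b) ^ 2
      = ∑ a, ∑ b, (G.dist a b : ℝ) * (x a * (x a - x b))
        + ∑ a, ∑ b, (G.dist a b : ℝ) * (x b * (x b - x a)) := by
    simp only [← sum_add_distrib]
    exact sum_congr rfl fun a _ ↦ sum_congr rfl fun b _ ↦ by ring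
  simp only [dotProduct, distLaplacian_mulVec, mul_sum, mul_left_comm (x _)]
  linarith

theorem dotProduct_distLaplacian_mulVec_le_of_le {G G' : SimpleGraph V}
    (hG : G.Connected) (h : G ≤ G') (x : V → ℝ) :
    x ⬝ᵥ distLaplacian G' *ᵥ x ≤ x ⬝ᵥ distLaplacian G *ᵥ x := by
  rw [dotProduct_distLaplacian_mulVec, dotProduct_distLaplacian_mulVec]
  gcongr with a _ b _
  exact hG.preconnected a b

theorem rhoL_le_of_le {G G' : SimpleGraph V} (hG : G.Connected) (h : G ≤ G') : rhoL G' ≤ rhoL G :=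
  Matrix.sSup_eigenvalues_le_of_dotProduct_mulVec_le (distLaplacian_isHermitian G)
    (distLaplacian_isHermitian G') (dotProduct_distLaplacian_mulVec_le_of_le hG h)

end DistLaplacian

theorem rhoL_addEdge_le_general {V : Type*} [Fintype V] (G : SimpleGraph V) (hG : G.Connected)
    (u v : V) :
    rhoL (G ⊔ SimpleGraph.fromEdgeSet {s(u, v)}) ≤ rhoL G :=
  rhoL_le_of_le hG le_sup_left

/-- Lemma 2.5 (Aouchiche–Hansen): adding an edge between two non-adjacent vertices of a
connected graph does not increase the distance Laplacian spectral radius. -/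
theorem rhoL_addEdge_le {V : Type*} [Fintype V] (G : SimpleGraph V) (hG : G.Connected)
    (u v : V) (huv : u ≠ v) (hadj : ¬ G.Adj u v) :
    rhoL (G ⊔ SimpleGraph.fromEdgeSet {s(u, v)}) ≤ rhoL G :=
  rhoL_addEdge_le_general G hG u v
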